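/- arXiv:2203.07582 — 4 statements merged into one kernel-verified Lean document; each statement's English description precedes it below -/
import Mathlib

section
/- Let R be a ring with identity, p ∈ R an idempotent, and x ∈ R with px(1-p) = 0. Set a = pxp, c = (1-p)xp, d = (1-p)x(1-p). If a and d have group inverses in the corner rings pRp and (1-p)R(1-p) respectively, and (1-dd^#)c(1-aa^#) = 0, then x has group inverse x^# = a^# + u + d^#, where u = (1-dd^#)c(a^#)^2 + (d^#)^2 c(1-aa^#) - d^# c a^#. -/
/-!
Relative to `p`, `x` is lower triangular: `x = a + c + d` with `a c = a d = d a = c c = c d = 0`.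
Since `y = y² a = a y²` and `z = z² d = d z²`, the corner group inverses inherit these
annihilation relations, after which the defining identities of the group inverse of `a + c + d`
come down to expanding products. For the proposed inverse `X`, the identities `X x X = X` and
`x X = X x` hold outright, while `x X x` differs from `x` by exactly `(1 - d z) c (1 - a y)`.
-/

/-- `x` is a group inverse of `a`. -/
def IsGroupInv {R : Type*} [Ring R] (a x : R) : Prop :=
  x * a * x = x ∧ a * x = x * a ∧ a * x * a = a

theorem mul_mul_of_mul_eq {R : Type*} [Semigroup R] {u v w : R} (h : u * v = w) (t : R) :
    u * (v * t) = w * t := by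
  rw [← mul_assoc, h]

theorem mul_mul_mul_of_mul_mul_eq {R : Type*} [Semigroup R] {u v w r : R} (h : u * v * w = r)
    (t : R) : u * (v * (w * t)) = r * t := by
  rw [← mul_assoc, ← mul_assoc, h]

theorem eq_of_forall_mul_eq_mul {R : Type*} [MulOneClass R] {u v : R} (h : ∀ t, u * t = v * t) :
    u = v := by
  simpa using h 1

namespace IsGroupInv

variable {R : Type*} [Ring R] {a b y : R}

theorem mul_mul_inv (h : IsGroupInv a y) : a * a * y = a := by
  rw [mul_assoc, h.2.1, ← mul_assoc, h.2.2]

theorem mul_inv_mul_inv (h : IsGroupInv a y) : a * y * y = y := by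
  rw [h.2.1, h.1]

theorem inv_mul_inv_mul (h : IsGroupInv a y) : y * y * a = y := by
  rw [mul_assoc, ← h.2.1, ← mul_assoc, h.1]

theorem inv_mul_eq_zero (h : IsGroupInv a y) (hab : a * b = 0) : y * b = 0 := by
  rw [← h.inv_mul_inv_mul, mul_assoc, hab, mul_zero]

theorem mul_inv_eq_zero (h : IsGroupInv a y) (hba : b * a = 0) : b * y = 0 := by
  rw [← h.mul_inv_mul_inv, ← mul_assoc, ← mul_assoc, hba, zero_mul, zero_mul]

theorem lowerTriangular_identities {c d z : R}
    (hay : IsGroupInv a y) (hdz : IsGroupInv d z)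
    (hac : a * c = 0) (had : a * d = 0) (hda : d * a = 0) (hcc : c * c = 0) (hcd : c * d = 0) :
    let x := a + c + d
    let X := y + ((1 - d * z) * c * (y * y) + (z * z) * c * (1 - a * y) - z * c * y) + z
    X * x * X = X ∧ x * X = X * x ∧ x * X * x = x - (1 - d * z) * c * (1 - a * y) := by
  have haz := hdz.mul_inv_eq_zero had
  have hza := hdz.inv_mul_eq_zero hda
  -- Multiplying on the right by a free `t` makes every monomial end in `t`, so each relation is
  -- needed only in the form `u * (v * t) = w * t`.
  refine ⟨?_, ?_, ?_⟩ <;> refine eq_of_forall_mul_eq_mul fun t => ?_ <;>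
  simp only [mul_add, add_mul, mul_sub, sub_mul, one_mul, mul_assoc, zero_mul, mul_zero,
      mul_mul_of_mul_eq hac, mul_mul_of_mul_eq had, mul_mul_of_mul_eq haz,
      mul_mul_of_mul_eq (hay.inv_mul_eq_zero hac), mul_mul_of_mul_eq (hay.inv_mul_eq_zero had),
      mul_mul_of_mul_eq (hay.inv_mul_eq_zero haz), mul_mul_of_mul_eq (hay.mul_inv_eq_zero hda),
      mul_mul_of_mul_eq hza, mul_mul_of_mul_eq (hay.mul_inv_eq_zero hza), mul_mul_of_mul_eq hcc,
      mul_mul_of_mul_eq hcd, mul_mul_of_mul_eq (hdz.mul_inv_eq_zero hcd),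
      mul_mul_of_mul_eq hay.2.1.symm, mul_mul_of_mul_eq hdz.2.1.symm,
      mul_mul_mul_of_mul_mul_eq hay.mul_mul_inv, mul_mul_mul_of_mul_mul_eq hdz.mul_mul_inv,
      mul_mul_mul_of_mul_mul_eq hay.mul_inv_mul_inv,
      mul_mul_mul_of_mul_mul_eq hdz.mul_inv_mul_inv] <;>
  abel

theorem add_add_of_lowerTriangular {c d z : R}
    (hay : IsGroupInv a y) (hdz : IsGroupInv d z)
    (hac : a * c = 0) (had : a * d = 0) (hda : d * a = 0) (hcc : c * c = 0) (hcd : c * d = 0)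
    (h0 : (1 - d * z) * c * (1 - a * y) = 0) :
    IsGroupInv (a + c + d)
      (y + ((1 - d * z) * c * (y * y) + (z * z) * c * (1 - a * y) - z * c * y) + z) := by
  obtain ⟨h1, h2, h3⟩ := lowerTriangular_identities hay hdz hac had hda hcc hcd
  exact ⟨h1, h2, by rw [h3, h0, sub_zero]⟩

end IsGroupInv

theorem mul_corner_mul_corner_eq_zero {R : Type*} [Ring R] {e f : R} (hef : e * f = 0)
    (g h x : R) : g * x * e * (f * x * h) = 0 := by
  rw [show g * x * e * (f * x * h) = g * x * (e * f) * (x * h) by simp only [mul_assoc], hef,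
    mul_zero, zero_mul]

theorem eq_peirce_of_mul_mul_sub_eq_zero {R : Type*} [Ring R] {p x : R}
    (h : p * x * (1 - p) = 0) : x = p * x * p + (1 - p) * x * p + (1 - p) * x * (1 - p) :=
  calc x = p * x * p + p * x * (1 - p) + (1 - p) * x * p + (1 - p) * x * (1 - p) := by
        noncomm_ring
    _ = _ := by rw [h, add_zero]

theorem stmt_1_general {R : Type*} [Ring R] (p x y z : R)
    (hp : p * p = p)
    (htriangular : p * x * (1 - p) = 0)
    (hy : IsGroupInv (p * x * p) y)
    (hz : IsGroupInv ((1 - p) * x * (1 - p)) z)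
    (hzero : (1 - ((1 - p) * x * (1 - p)) * z) * ((1 - p) * x * p) * (1 - (p * x * p) * y) = 0) :
    IsGroupInv x
      (y +
        ((1 - ((1 - p) * x * (1 - p)) * z) * ((1 - p) * x * p) * (y * y)
          + (z * z) * ((1 - p) * x * p) * (1 - (p * x * p) * y)
          - z * ((1 - p) * x * p) * y)
        + z) := by
  have hpq : p * (1 - p) = 0 := by rw [mul_sub, mul_one, hp, sub_self]
  have hqp : (1 - p) * p = 0 := by rw [sub_mul, one_mul, hp, sub_self]
  have key := hy.add_add_of_lowerTriangular hz (mul_corner_mul_corner_eq_zero hpq _ _ _)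
    (mul_corner_mul_corner_eq_zero hpq _ _ _) (mul_corner_mul_corner_eq_zero hqp _ _ _)
    (mul_corner_mul_corner_eq_zero hpq _ _ _) (mul_corner_mul_corner_eq_zero hpq _ _ _) hzero
  rwa [← eq_peirce_of_mul_mul_sub_eq_zero htriangular] at key

theorem stmt_1 {R : Type*} [Ring R] (p x y z : R)
    (hp : p * p = p)
    (htriangular : p * x * (1 - p) = 0)
    (hy_corner : y = p * y * p)
    (hy : IsGroupInv (p * x * p) y)
    (hz_corner : z = (1 - p) * z * (1 - p))
    (hz : IsGroupInv ((1 - p) * x * (1 - p)) z)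
    (hzero : (1 - ((1 - p) * x * (1 - p)) * z) * ((1 - p) * x * p) * (1 - (p * x * p) * y) = 0) :
    IsGroupInv x
      (y +
        ((1 - ((1 - p) * x * (1 - p)) * z) * ((1 - p) * x * p) * (y * y)
          + (z * z) * ((1 - p) * x * p) * (1 - (p * x * p) * y)
          - z * ((1 - p) * x * p) * y)
        + z) :=
  stmt_1_general p x y z hp htriangular hy hz hzero
end

section
/- Let R be a ring with identity and a, b ∈ R such that a, b, and abb^# all have group inverses and abb^# = baa^#. Then a + b has a group inverse if and only if 2abb^# has a group inverse. -/
section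

variable {R : Type*} [Ring R]

theorem IsIdempotentElem.corner_mul_corner {f r : R} (hf : IsIdempotentElem f)
    (hr : f * r * f = f * r) (s : R) : f * r * f * (f * s * f) = f * (r * s) * f := by
  rw [show f * r * f * (f * s * f) = f * r * (f * f) * s * f by noncomm_ring, hf.eq, hr]
  noncomm_ring

namespace IsGroupInv

variable {a x : R}

theorem mul_eq_of_mul_left_eq {p : R} (h : IsGroupInv a x) (hp : p * a = a) : p * x = x := by
  have hx : a * x * x = x := by rw [h.2.1, h.1]
  rw [← hx, ← mul_assoc, ← mul_assoc, hp]

theorem inv_mul_eq_zero_s7 {r : R} (h : IsGroupInv a x) (hr : a * r = 0) : x * r = 0 := by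
  rw [← h.1, mul_assoc x a, h.2.1, mul_assoc, mul_assoc, hr, mul_zero, mul_zero]

theorem mul_inv_eq_zero_s7 {r : R} (h : IsGroupInv a x) (hr : r * a = 0) : r * x = 0 := by
  rw [← h.1, ← h.2.1, ← mul_assoc, ← mul_assoc, hr, zero_mul, zero_mul]

theorem isIdempotentElem (h : IsGroupInv a x) : IsIdempotentElem (a * x) := by
  rw [IsIdempotentElem, ← mul_assoc, h.2.2]

theorem of_eq_sq_mul_of_eq_mul_sq {t x y : R} (h1 : t = t ^ 2 * x) (h2 : t = y * t ^ 2) :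
    IsGroupInv t (y * (t * x)) := by
  rw [sq] at h1 h2
  have hxy : t * x = y * t := by linear_combination (norm := noncomm_ring) h2 * x - y * h1
  have htxt : t * x * t = t := by linear_combination (norm := noncomm_ring) hxy * t - h2
  have htyt : t * (y * t) = t := by linear_combination (norm := noncomm_ring) -t * hxy - h1
  refine ⟨?_, ?_, ?_⟩
  · linear_combination (norm := noncomm_ring) y * htxt * (y * (t * x)) + y * htyt * x
  · linear_combination (norm := noncomm_ring) htyt * x - y * htxt + hxy
  · linear_combination (norm := noncomm_ring) htyt * (x * t) + htxt

theorem add_mul_add {b y : R} (ha : IsGroupInv a x) (hb : IsGroupInv b y) (hab : a * b = 0)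
    (hba : b * a = 0) : (a + b) * (x + y) = a * x + b * y := by
  rw [add_mul, mul_add, mul_add, mul_inv_eq_zero_s7 hb hab, mul_inv_eq_zero_s7 ha hba, add_zero,
    zero_add]

theorem add {b y : R} (ha : IsGroupInv a x) (hb : IsGroupInv b y) (hab : a * b = 0)
    (hba : b * a = 0) : IsGroupInv (a + b) (x + y) := by
  have hay := mul_inv_eq_zero_s7 hb hab
  have hbx := mul_inv_eq_zero_s7 ha hba
  have hxb := inv_mul_eq_zero_s7 ha hab
  have hya := inv_mul_eq_zero_s7 hb hba
  obtain ⟨ha1, ha2, ha3⟩ := ha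
  obtain ⟨hb1, hb2, hb3⟩ := hb
  refine ⟨?_, ?_, ?_⟩
  · linear_combination (norm := noncomm_ring)
      ha1 + hb1 + x * hay + hxb * x + hxb * y + hya * x + hya * y + y * hbx
  · linear_combination (norm := noncomm_ring) ha2 + hb2 + hay + hbx - hxb - hya
  · linear_combination (norm := noncomm_ring)
      ha3 + hb3 + a * hxb + hay * a + hay * b + hbx * a + hbx * b + b * hya

theorem corner {f : R} (hf : IsIdempotentElem f) (h : IsGroupInv a x) (ha : f * a * f = f * a)
    (hx : f * x * f = f * x) : IsGroupInv (f * a * f) (f * x * f) := by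
  have hax : f * (a * x) * f = f * (a * x) := by
    linear_combination (norm := noncomm_ring) -(ha * (x * f)) + f * a * hx + ha * x
  have hxa : f * (x * a) * f = f * (x * a) := by
    linear_combination (norm := noncomm_ring) -(hx * (a * f)) + f * x * ha + hx * a
  refine ⟨?_, ?_, ?_⟩
  · rw [hf.corner_mul_corner hx, hf.corner_mul_corner hxa, h.1]
  · rw [hf.corner_mul_corner ha, hf.corner_mul_corner hx, h.2.1]
  · rw [hf.corner_mul_corner ha, hf.corner_mul_corner hax, h.2.2]

theorem mul_eq_mul_sq {M g e : R} (hg : IsGroupInv M g) (hMe : e * (M * e) = M * e) :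
    M * e = g * (M * e) ^ 2 := by
  linear_combination (norm := noncomm_ring) -(g * M * hMe) + hg.2.1 * M * e - hg.2.2 * e

end IsGroupInv

theorem exists_isGroupInv_mul_of_eq_mul_sq {k c d g : R} (hc : IsGroupInv c d)
    (hk : ∀ r, Commute k r) (h : k * c = g * (k * c) ^ 2) : ∃ w, IsGroupInv (k * c) w := by
  have hccd : c * c * d = c := by rw [mul_assoc, hc.2.1, ← mul_assoc, hc.2.2]
  -- multiply `h` on the right by `d`, then conjugate by `c` and `d`, moving `k` freely
  have h1 : k * (c * d) = g * k * k * c := by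
    linear_combination (norm := noncomm_ring) h * d - g * k * (hk c).eq * c * d + g * k * k * hccd
  have h2 : k * (c * d) = k * k * c * (g * (c * d)) := by
    linear_combination (norm := noncomm_ring) c * h1 * d - k * hccd * d + (hk c).eq * c * d * d
      - (c * (hk g).eq * k + (hk c).eq * g * k + k * c * (hk g).eq + k * (hk c).eq * g) * c * d
  have h3 : k * c = (k * c) ^ 2 * (g * (c * d)) := by
    linear_combination (norm := noncomm_ring)
      c * h2 - k * hccd + (hk c).eq * c * d - (hk c).eq * k * c * g * (c * d)
  exact ⟨_, IsGroupInv.of_eq_sq_mul_of_eq_mul_sq h3 h⟩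

/- `z + C + B` is the block matrix `[[z, C], [0, B]]`; `x` and `y` below are read off the block
formula for its group inverse. -/
theorem exists_isGroupInv_add_add {z C B zs Bs : R} (hz : IsGroupInv z zs)
    (hB : IsGroupInv B Bs) (hzB : z * B = 0) (hBz : B * z = 0) (hCz : C * z = 0)
    (hBC : B * C = 0) (hCC : C * C = 0) (hCB : C * B * Bs = C) :
    ∃ w, IsGroupInv (z + C + B) w := by
  have hzBs := hB.mul_inv_eq_zero_s7 hzB
  have hBzs := hz.mul_inv_eq_zero_s7 hBz
  have hCzs := hz.mul_inv_eq_zero_s7 hCz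
  have hBsz := hB.inv_mul_eq_zero_s7 hBz
  have hBsC := hB.inv_mul_eq_zero_s7 hBC
  have hzsB := hz.inv_mul_eq_zero_s7 hzB
  have hzzs : z * z * zs = z := by rw [mul_assoc, hz.2.1, ← mul_assoc, hz.2.2]
  have hBBs : B * B * Bs = B := by rw [mul_assoc, hB.2.1, ← mul_assoc, hB.2.2]
  have hzsz : zs * z * z = z := by rw [← hz.2.1, hz.2.2]
  have hBsB : Bs * B * B = B := by rw [← hB.2.1, hB.2.2]
  have hsq : (z + C + B) ^ 2 = z * z + z * C + C * B + B * B := by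
    linear_combination (norm := noncomm_ring) hzB + hCz + hCC + hBz + hBC
  refine ⟨_, IsGroupInv.of_eq_sq_mul_of_eq_mul_sq (x := zs + Bs - zs * C * Bs)
    (y := zs + Bs + (1 - z * zs) * C * (Bs * Bs) - zs * C * Bs) ?_ ?_⟩ <;> rw [hsq]
  · linear_combination (norm := noncomm_ring)
      -(hzzs + z * hzBs - hzzs * (C * Bs) + z * hCzs - z * hCzs * (C * Bs) + C * hBzs + hCB
      - C * hBzs * (C * Bs) + B * hBzs + hBBs - B * hBzs * (C * Bs))
  · linear_combination (norm := noncomm_ring)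
      -(hzsz + hzsB * B + hBsz * z + hBsz * C + hBsC * B + hBsB
      + (1 - z * zs) * C * Bs * (hBsz * z + hBsz * C + hBsC * B + hBsB)
      - (1 - z * zs) * C * hB.2.1 + (1 - z * zs) * hCB
      - zs * C * (hBsz * z + hBsz * C + hBsC * B + hBsB) - hz.2.1 * C)

/- Along `e`, `M` is the block matrix `[[M e, C], [0, B]]` with `C = e M (1 - e)` and
`B = (1 - e) M`; `hMB` is the condition `C B Bs = C`. -/
theorem exists_isGroupInv_of_triangular {e M zs Bs : R} (he : IsIdempotentElem e)
    (hMe : e * (M * e) = M * e) (hz : IsGroupInv (M * e) zs) (hB : IsGroupInv ((1 - e) * M) Bs)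
    (hMB : M * ((1 - e) * M * Bs) = M * (1 - e)) : ∃ w, IsGroupInv M w := by
  have hfe : (1 - e) * (M * e) = 0 := by
    rw [← hMe, ← mul_assoc, sub_mul, one_mul, he.eq, sub_self, zero_mul]
  have hM : M = M * e + e * M * (1 - e) + (1 - e) * M := by
    linear_combination (norm := noncomm_ring) hMe
  rw [hM]
  refine exists_isGroupInv_add_add hz hB ?_ ?_ ?_ ?_ ?_ ?_
  · linear_combination (norm := noncomm_ring) -(M * he.eq * M)
  · linear_combination (norm := noncomm_ring) hfe * (M * e) - (1 - e) * M * hMe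
  · linear_combination (norm := noncomm_ring) e * M * hfe
  · linear_combination (norm := noncomm_ring) hfe * M * (1 - e)
  · linear_combination (norm := noncomm_ring) -(e * M * he.eq * M * (1 - e))
  · linear_combination (norm := noncomm_ring) e * hMB + e * M * he.eq * M * Bs

structure CommonPart (a as b bs c d : R) : Prop where
  left : IsGroupInv a as
  right : IsGroupInv b bs
  common : IsGroupInv c d
  mul_left : a * (b * bs) = c
  mul_right : b * (a * as) = c

namespace CommonPart

variable {a as b bs c d : R}

theorem symm (h : CommonPart a as b bs c d) : CommonPart b bs a as c d :=
  ⟨h.right, h.left, h.common, h.mul_right, h.mul_left⟩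

theorem mul_groupInv_mul_eq (h : CommonPart a as b bs c d) : a * as * c = c := by
  rw [← h.mul_left, ← mul_assoc, h.left.2.2]

theorem mul_inv_eq_idempotent (h : CommonPart a as b bs c d) : a * d = c * d := by
  have hq : b * bs * d = d := h.common.mul_eq_of_mul_left_eq h.symm.mul_groupInv_mul_eq
  calc a * d = a * (b * bs) * d := by rw [mul_assoc, hq]
    _ = c * d := by rw [h.mul_left]

theorem mul_idempotent_eq (h : CommonPart a as b bs c d) : a * (c * d) = c := by
  rw [h.common.2.1, ← mul_assoc, h.mul_inv_eq_idempotent, h.common.2.2]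

theorem groupInv_mul_idempotent_eq (h : CommonPart a as b bs c d) : as * (c * d) = d := by
  rw [← h.mul_inv_eq_idempotent, ← mul_assoc, ← h.left.2.1,
    h.common.mul_eq_of_mul_left_eq h.mul_groupInv_mul_eq]

theorem corner_eq (h : CommonPart a as b bs c d) :
    (1 - c * d) * a * (1 - c * d) = (1 - c * d) * a := by
  linear_combination (norm := noncomm_ring) -((1 - c * d) * h.mul_idempotent_eq) + h.common.2.2

theorem corner_groupInv_eq (h : CommonPart a as b bs c d) :
    (1 - c * d) * as * (1 - c * d) = (1 - c * d) * as := by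
  have hed : c * d * d = d := h.common.mul_eq_of_mul_left_eq h.common.2.2
  linear_combination (norm := noncomm_ring) -((1 - c * d) * h.groupInv_mul_idempotent_eq) + hed

theorem isGroupInv_corner (h : CommonPart a as b bs c d) :
    IsGroupInv ((1 - c * d) * a * (1 - c * d)) ((1 - c * d) * as * (1 - c * d)) :=
  h.left.corner h.common.isIdempotentElem.one_sub h.corner_eq h.corner_groupInv_eq

theorem corner_mul_corner_eq_zero (h : CommonPart a as b bs c d) :
    (1 - c * d) * a * (1 - c * d) * ((1 - c * d) * b * (1 - c * d)) = 0 := by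
  have hab : a * b = c * b := by rw [← h.mul_left, mul_assoc, h.right.2.2]
  rw [h.common.isIdempotentElem.one_sub.corner_mul_corner h.corner_eq, hab]
  linear_combination (norm := noncomm_ring) -(h.common.2.2 * b * (1 - c * d))

theorem add_mul_corner_eq (h : CommonPart a as b bs c d) :
    (a + b) * ((1 - c * d) * (a * as) * (1 - c * d)) = a - c := by
  have hap : a * (a * as) = a := by rw [h.left.2.1, ← mul_assoc, h.left.2.2]
  have hce : c * (c * d) = c := by rw [h.common.2.1, ← mul_assoc, h.common.2.2]
  have hcp : c * (a * as) = c := by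
    rw [← h.mul_right, mul_assoc, h.left.isIdempotentElem.eq]
  linear_combination (norm := noncomm_ring)
    (-h.mul_idempotent_eq - h.symm.mul_idempotent_eq) * (a * as) * (1 - c * d)
    + (hap + h.mul_right - 2 * hcp) * (1 - c * d) - h.mul_idempotent_eq + hce

theorem one_sub_mul_add_eq (h : CommonPart a as b bs c d) :
    (1 - c * d) * (a + b) = (1 - c * d) * a * (1 - c * d) + (1 - c * d) * b * (1 - c * d) := by
  rw [mul_add, h.corner_eq, h.symm.corner_eq]

theorem isGroupInv_one_sub_mul_add (h : CommonPart a as b bs c d) :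
    IsGroupInv ((1 - c * d) * (a + b))
      ((1 - c * d) * as * (1 - c * d) + (1 - c * d) * bs * (1 - c * d)) := by
  rw [h.one_sub_mul_add_eq]
  exact h.isGroupInv_corner.add h.symm.isGroupInv_corner h.corner_mul_corner_eq_zero
    h.symm.corner_mul_corner_eq_zero

theorem add_mul_one_sub_mul_add_mul_eq (h : CommonPart a as b bs c d) :
    (a + b) * ((1 - c * d) * (a + b) *
      ((1 - c * d) * as * (1 - c * d) + (1 - c * d) * bs * (1 - c * d))) =
      (a + b) * (1 - c * d) := by
  have hf := h.common.isIdempotentElem.one_sub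
  have hb := h.symm.add_mul_corner_eq
  rw [add_comm b a] at hb
  rw [h.one_sub_mul_add_eq, h.isGroupInv_corner.add_mul_add h.symm.isGroupInv_corner
      h.corner_mul_corner_eq_zero h.symm.corner_mul_corner_eq_zero,
    hf.corner_mul_corner h.corner_eq, hf.corner_mul_corner h.symm.corner_eq, mul_add,
    h.add_mul_corner_eq, hb]
  linear_combination (norm := noncomm_ring) h.mul_idempotent_eq + h.symm.mul_idempotent_eq

end CommonPart

end

theorem stmt_7 {R : Type*} [Ring R] (a b as bs : R)
    (ha : IsGroupInv a as)
    (hb : IsGroupInv b bs)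
    (hab : ∃ w, IsGroupInv (a * (b * bs)) w)
    (h : a * (b * bs) = b * (a * as)) :
    (∃ w, IsGroupInv (a + b) w) ↔ (∃ w, IsGroupInv (2 * (a * (b * bs))) w) := by
  obtain ⟨d, hd⟩ := hab
  set c := a * (b * bs)
  have hc : CommonPart a as b bs c d := ⟨ha, hb, hd, rfl, h.symm⟩
  have hMe : (a + b) * (c * d) = 2 * c := by
    rw [add_mul, hc.mul_idempotent_eq, hc.symm.mul_idempotent_eq, two_mul]
  have heMe : c * d * ((a + b) * (c * d)) = (a + b) * (c * d) := by
    rw [hMe]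
    linear_combination (norm := noncomm_ring) 2 * hd.2.2
  constructor
  · rintro ⟨g, hg⟩
    refine exists_isGroupInv_mul_of_eq_mul_sq (g := g) hd (Commute.ofNat_left 2) ?_
    rw [← hMe]
    exact hg.mul_eq_mul_sq heMe
  · rintro ⟨w, hw⟩
    exact exists_isGroupInv_of_triangular hd.isIdempotentElem heMe (hMe ▸ hw)
      hc.isGroupInv_one_sub_mul_add hc.add_mul_one_sub_mul_add_mul_eq
end

section
/- Let R be a ring with identity and a, b ∈ R with group inverses. If a²b = aba and b²a = bab, then ab has a group inverse and (ab)^# = a^# b^#. -/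
namespace IsGroupInv

variable {R : Type*} [Ring R] {a b as bs : R}

theorem mul_self_mul (h : IsGroupInv a as) : as * as * a = as := by
  rw [mul_assoc, ← h.2.1, ← mul_assoc, h.1]

/-- With `e = a * as`: `e * x * e` equals both `e * x` and `x * e`, so `e` commutes with `x`. -/
theorem inv_commute_of_commute (h : IsGroupInv a as) {x : R} (hx : Commute a x) :
    Commute as x := by
  obtain ⟨h1, hc, h3⟩ := h
  have hex : a * as * x * (a * as) = a * as * x :=
    calc a * as * x * (a * as) = as * x * (a * (a * as)) := by
          rw [hc, mul_assoc as a x, hx.eq]; simp only [mul_assoc]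
      _ = as * x * a := by rw [hc, ← mul_assoc a as a, h3]
      _ = a * as * x := by rw [mul_assoc, ← hx.eq, ← mul_assoc, ← hc]
  have hxe : a * as * x * (a * as) = x * (a * as) :=
    calc a * as * x * (a * as) = a * as * (a * x) * as := by
          rw [hx.eq]; simp only [mul_assoc]
      _ = x * (a * as) := by rw [← mul_assoc, h3, hx.eq, mul_assoc]
  have he : a * as * x = x * (a * as) := hex.symm.trans hxe
  calc as * x = as * (a * as) * x := by rw [← mul_assoc, h1]
    _ = as * x * (a * as) := by rw [mul_assoc, he, mul_assoc]
    _ = a * as * x * as := by rw [← mul_assoc, mul_assoc as, ← hx.eq, ← mul_assoc, ← hc]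
    _ = x * as := by rw [he, mul_assoc, hc, h1]

theorem inv_mul_eq_of_commute (h : IsGroupInv a as) (hab : Commute a (a * b)) :
    as * b = a * b * as * as := by
  have hc := (h.inv_commute_of_commute hab).eq
  calc as * b = as * (as * (a * b)) := by simp only [← mul_assoc, h.mul_self_mul]
    _ = a * b * as * as := by rw [hc, ← mul_assoc, hc]

theorem inv_mul_mul_eq_of_commute (h : IsGroupInv a as) (hab : Commute a (a * b)) :
    as * b * a = a * b * as := by
  rw [h.inv_mul_eq_of_commute hab, mul_assoc (a * b) as as, mul_assoc (a * b) (as * as) a,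
    h.mul_self_mul]

theorem of_commute_of_eq_mul {c p q : R} (hcp : Commute c p) (hcpc : c * p * c = c)
    (hp : p = c * q) : IsGroupInv c p := by
  refine ⟨?_, hcp.eq, hcpc⟩
  calc p * c * p = c * p * (c * q) := by rw [← hcp.eq, ← hp]
    _ = p := by rw [← mul_assoc, hcpc, hp]

theorem mul_of_commute (ha : IsGroupInv a as) (hb : IsGroupInv b bs)
    (hab : Commute a (a * b)) (hba : Commute b (b * a)) : IsGroupInv (a * b) (as * bs) := by
  have hasba := ha.inv_mul_mul_eq_of_commute hab
  have hbsab := hb.inv_mul_mul_eq_of_commute hba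
  have hc := (ha.inv_commute_of_commute hab).eq
  have ⟨hb1, hbc, hb3⟩ := hb
  refine of_commute_of_eq_mul (q := as * as * (bs * bs)) ?_ ?_ ?_
  · calc a * b * (as * bs) = as * (b * a * bs) := by
          rw [← mul_assoc (a * b) as bs, ← hasba]; simp only [mul_assoc]
      _ = as * bs * (a * b) := by rw [← hbsab]; simp only [mul_assoc]
  · calc a * b * (as * bs) * (a * b) = as * a * (b * bs * (a * b)) := by
          rw [← mul_assoc (a * b) as bs, ← hc]; simp only [mul_assoc]
      _ = as * a * (bs * b * b * a) := by
          rw [hbc, mul_assoc bs b (a * b), ← mul_assoc b a b, ← hba.eq]; simp only [mul_assoc]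
      _ = as * (a * (a * b)) := by
          rw [← hbc, hb3, mul_assoc as a (b * a), ← mul_assoc a b a, ← hab.eq]
      _ = a * b := by rw [← mul_assoc as a (a * b), ← mul_assoc (as * a) a b, ← ha.2.1, ha.2.2]
  · calc as * bs = as * b * (bs * bs) := by rw [mul_assoc, ← mul_assoc b, hbc, hb1]
      _ = a * b * (as * as * (bs * bs)) := by
          rw [ha.inv_mul_eq_of_commute hab]; simp only [mul_assoc]

end IsGroupInv

theorem stmt_8 {R : Type*} [Ring R] (a b as bs : R)
    (ha : IsGroupInv a as)
    (hb : IsGroupInv b bs)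
    (h1 : a ^ 2 * b = a * b * a)
    (h2 : b ^ 2 * a = b * a * b) :
    IsGroupInv (a * b) (as * bs) :=
  ha.mul_of_commute hb (by rwa [Commute, SemiconjBy, ← mul_assoc, ← sq])
    (by rwa [Commute, SemiconjBy, ← mul_assoc, ← sq])
end

section
/- Let X, Y be Banach spaces and M = [[A,B],[C,D]] a bounded operator on X ⊕ Y, where A and D have group inverses. If A^π B = 0, D^π C = 0, BCA^π = 0, ABC = 0, and BD = BCA^#B, then M has a group inverse. -/
open ContinuousLinearMap

namespace IsGroupInv

variable {R : Type*} [Ring R] {p p' q q' : R}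

theorem one_sub_mul_inv_mul_self (hp : IsGroupInv p p') : (1 - p * p') * p = 0 := by
  rw [sub_mul, one_mul, hp.2.2, sub_self]

theorem inv_mul_eq_zero_of_mul_eq_zero (hp : IsGroupInv p p') (hpq : p * q = 0) :
    p' * q = 0 := by
  obtain ⟨hp1, hp2, -⟩ := hp
  linear_combination (norm := noncomm_ring) -hp1 * q + p' * hp2 * q + p' * p' * hpq

theorem mul_inv_eq_zero_of_mul_eq_zero (hq : IsGroupInv q q') (hpq : p * q = 0) :
    p * q' = 0 := by
  obtain ⟨hq1, hq2, -⟩ := hq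
  linear_combination (norm := noncomm_ring) -p * hq1 - p * hq2 * q' + hpq * q' * q'

theorem add_of_mul_eq_zero (hp : IsGroupInv p p') (hq : IsGroupInv q q') (hpq : p * q = 0) :
    IsGroupInv (p + q) ((1 - q * q') * p' + q' * (1 - p * p')) := by
  have hp'q := hp.inv_mul_eq_zero_of_mul_eq_zero hpq
  have hpq' := hq.mul_inv_eq_zero_of_mul_eq_zero hpq
  obtain ⟨hp1, hp2, hp3⟩ := hp
  obtain ⟨hq1, hq2, hq3⟩ := hq
  have hsw : (p + q) * ((1 - q * q') * p' + q' * (1 - p * p')) =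
      p * p' + q * q' - q * q' * (p * p') := by
    linear_combination (norm := noncomm_ring)
      -hpq * (q' * p') + hpq' * (1 - p * p') - q * hq2 * p' - hq3 * p'
  have hws : ((1 - q * q') * p' + q' * (1 - p * p')) * (p + q) =
      p * p' + q * q' - q * q' * (p * p') := by
    linear_combination (norm := noncomm_ring)
      -hp2 + hp'q + q * q' * hp2 - q * q' * hp'q - q' * hp3 - hq2 - q' * p * hp'q
  refine ⟨?_, hsw.trans hws.symm, ?_⟩
  · rw [mul_assoc, hsw]
    linear_combination (norm := noncomm_ring) hp1 - q * q' * hp1 - q' * p * hp1 +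
      (hp'q * q' - q * q' * hp'q * q' + hq1 - q' * p * hp'q * q') * (1 - p * p')
  · rw [hsw]
    linear_combination (norm := noncomm_ring)
      hp3 + p * hp'q + hq3 - q * q' * hp3 - q * q' * p * hp'q

end IsGroupInv

section

variable {R M N : Type*} [Ring R] [TopologicalSpace M] [AddCommGroup M] [Module R M]
  [TopologicalSpace N] [AddCommGroup N] [Module R N]

theorem ContinuousLinearMap.comp_comp_mul_comp_comp (i : M →L[R] N) (r : N →L[R] M)
    (x y : M →L[R] M) : (i ∘L x ∘L r) * (i ∘L y ∘L r) = i ∘L (x * (r ∘L i) * y) ∘L r := by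
  simp only [mul_def, comp_assoc]

theorem ContinuousLinearMap.prod_eq_inl_comp_add_inr_comp [ContinuousAdd M] [ContinuousAdd N]
    {P : Type*} [TopologicalSpace P] [AddCommGroup P] [Module R P]
    (f : P →L[R] M) (g : P →L[R] N) :
    f.prod g = inl R M N ∘L f + inr R M N ∘L g := by
  ext x <;> simp

variable [IsTopologicalAddGroup M] [IsTopologicalAddGroup N]

/-- Cline's formula for group inverses. -/
theorem IsGroupInv.comp_swap {i : M →L[R] N} {r : N →L[R] M} {a' : M →L[R] M}
    (h : IsGroupInv (r ∘L i) a') (hr : (1 - (r ∘L i) * a') ∘L r = 0) :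
    IsGroupInv (i ∘L r) (i ∘L (a' * a') ∘L r) := by
  have hir : i ∘L r = i ∘L (1 : M →L[R] M) ∘L r := rfl
  obtain ⟨h1, h2, -⟩ := h
  refine ⟨?_, ?_, ?_⟩
  · rw [hir, comp_comp_mul_comp_comp, comp_comp_mul_comp_comp]
    congr 2
    linear_combination (norm := noncomm_ring)
      (-a' * h2 + h1) * ((r ∘L i) * a' * a') + h1 * a'
  · rw [hir, comp_comp_mul_comp_comp, comp_comp_mul_comp_comp]
    congr 2
    linear_combination (norm := noncomm_ring) h2 * a' + a' * h2
  · calc i ∘L r * i ∘L (a' * a') ∘L r * i ∘L r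
        = i ∘L (1 * (r ∘L i) * (a' * a') * (r ∘L i) * 1) ∘L r := by
          rw [hir, comp_comp_mul_comp_comp, comp_comp_mul_comp_comp]
      _ = i ∘L ((1 - (1 - (r ∘L i) * a')) ∘L r) := by
          congr 2
          linear_combination (norm := noncomm_ring) (r ∘L i) * (-a' * h2 + h1)
      _ = i ∘L r := by
          rw [sub_comp, hr, sub_zero]
          rfl

end

theorem stmt_17_general {X Y : Type*}
    [NormedAddCommGroup X] [NormedSpace ℂ X]
    [NormedAddCommGroup Y] [NormedSpace ℂ Y]
    (A As : X →L[ℂ] X) (B : Y →L[ℂ] X) (C : X →L[ℂ] Y) (D Ds : Y →L[ℂ] Y)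
    (hA : IsGroupInv A As) (hD : IsGroupInv D Ds)
    (h1 : (1 - A * As) ∘L B = 0)
    (h2 : (1 - D * Ds) ∘L C = 0)
    (h4 : A ∘L (B ∘L C) = 0)
    (h5 : B ∘L D = (B ∘L C) ∘L (As ∘L B)) :
    ∃ W, IsGroupInv
        (((A ∘L ContinuousLinearMap.fst ℂ X Y) + (B ∘L ContinuousLinearMap.snd ℂ X Y)).prod
          ((C ∘L ContinuousLinearMap.fst ℂ X Y) + (D ∘L ContinuousLinearMap.snd ℂ X Y))) W := by
  have hB : B = As ∘L A ∘L B := by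
    rwa [sub_comp, sub_eq_zero, one_def, id_comp, hA.2.1] at h1
  have hBC : B ∘L C = 0 := by rw [hB, comp_assoc, comp_assoc, h4, comp_zero]
  have hBD : B ∘L D = 0 := by rw [h5, hBC, zero_comp]
  have hP := IsGroupInv.comp_swap (i := inl ℂ X Y) (r := A.coprod B) (a' := As)
    (by rwa [coprod_comp_inl]) (by
      rw [coprod_comp_inl, comp_coprod, ← mul_def, hA.one_sub_mul_inv_mul_self, h1]
      ext <;> simp)
  have hQ := IsGroupInv.comp_swap (i := inr ℂ X Y) (r := C.coprod D) (a' := Ds)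
    (by rwa [coprod_comp_inr]) (by
      rw [coprod_comp_inr, comp_coprod, ← mul_def, hD.one_sub_mul_inv_mul_self, h2]
      ext <;> simp)
  have hPQ : (inl ℂ X Y ∘L A.coprod B) * (inr ℂ X Y ∘L C.coprod D) = 0 := by
    rw [mul_def, comp_assoc, ← comp_assoc _ (inr ℂ X Y), coprod_comp_inr, comp_coprod, hBC, hBD]
    ext <;> simp
  rw [comp_fst_add_comp_snd, comp_fst_add_comp_snd, prod_eq_inl_comp_add_inr_comp]
  exact ⟨_, hP.add_of_mul_eq_zero hQ hPQ⟩

theorem stmt_17 {X Y : Type*}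
    [NormedAddCommGroup X] [NormedSpace ℂ X] [CompleteSpace X]
    [NormedAddCommGroup Y] [NormedSpace ℂ Y] [CompleteSpace Y]
    (A As : X →L[ℂ] X) (B : Y →L[ℂ] X) (C : X →L[ℂ] Y) (D Ds : Y →L[ℂ] Y)
    (hA : IsGroupInv A As) (hD : IsGroupInv D Ds)
    (h1 : (1 - A * As) ∘L B = 0)
    (h2 : (1 - D * Ds) ∘L C = 0)
    (h3 : ((B ∘L C) : X →L[ℂ] X) * (1 - A * As) = 0)
    (h4 : A ∘L (B ∘L C) = 0)
    (h5 : B ∘L D = (B ∘L C) ∘L (As ∘L B)) :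
    ∃ W, IsGroupInv
        (((A ∘L ContinuousLinearMap.fst ℂ X Y) + (B ∘L ContinuousLinearMap.snd ℂ X Y)).prod
          ((C ∘L ContinuousLinearMap.fst ℂ X Y) + (D ∘L ContinuousLinearMap.snd ℂ X Y))) W :=
  stmt_17_general A As B C D Ds hA hD h1 h2 h4 h5
end
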